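/- Assume det l(ξ) ≠ 0 for all ξ ∈ ℝ and that ‖l⁻¹‖_{M₁} and ‖l⁻¹‖_{M₂} are finite. Then for every u = (u₁,u₂) ∈ H, the function g(u) is essentially bounded and ‖g(u)‖_{L^∞(ℝ)} ≤ ‖l⁻¹‖_{M₂} · ( κ₀ · ( κ₂·‖u‖_H + κ₃ ) + κ₄ ) · ‖u‖_H. -/

import Mathlib

open MeasureTheory Real
open scoped FourierTransform

noncomputable section

/-- Fourier transform `û(ξ) = ∫ u(x) e^{-2πixξ} dx` of a real-valued function on `ℝ`. -/
def rhat (f : ℝ → ℝ) : ℝ → ℂ :=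
  𝓕 (fun x => (f x : ℂ))

/-- `(1,1)` entry of the Thomas symbol `l(ξ)`. -/
def sym11 (ν lam₆ : ℝ) (ξ : ℝ) : ℝ := -ν * (2 * π * ξ) ^ 2 + lam₆ - 1

/-- `(2,2)` entry of the Thomas symbol `l(ξ)`. -/
def sym22 (ν₃ : ℝ) (ξ : ℝ) : ℝ := -(2 * π * ξ) ^ 2 - ν₃

/-- Determinant of the Thomas symbol `l(ξ)`. -/
def symDet (ν ν₃ lam₅ lam₆ lam₇ : ℝ) (ξ : ℝ) : ℝ :=
  sym11 ν lam₆ ξ * sym22 ν₃ ξ - lam₇ * lam₅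

/-- Squared Euclidean norm of `l(ξ) · (û₁(ξ), û₂(ξ))`. -/
def Hintegrand (ν ν₃ lam₅ lam₆ lam₇ : ℝ) (u₁ u₂ : ℝ → ℝ) (ξ : ℝ) : ℝ :=
  ‖(sym11 ν lam₆ ξ : ℂ) * rhat u₁ ξ + (lam₇ : ℂ) * rhat u₂ ξ‖ ^ 2 +
    ‖(lam₅ : ℂ) * rhat u₁ ξ + (sym22 ν₃ ξ : ℂ) * rhat u₂ ξ‖ ^ 2

/-- The `H`-norm `‖u‖_H = (∫ |l(ξ)·û(ξ)|² dξ)^{1/2}` of a pair `u = (u₁, u₂)`. -/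
def normH (ν ν₃ lam₅ lam₆ lam₇ : ℝ) (u₁ u₂ : ℝ → ℝ) : ℝ :=
  Real.sqrt (∫ ξ : ℝ, Hintegrand ν ν₃ lam₅ lam₆ lam₇ u₁ u₂ ξ)

/-- Membership of the pair `(u₁, u₂)` in the Hilbert space `H` (with the integrability
conditions making the Fourier integrals and the `H`-norm integral well defined). -/
def MemH (ν ν₃ lam₅ lam₆ lam₇ : ℝ) (u₁ u₂ : ℝ → ℝ) : Prop :=
  MemLp u₁ 2 volume ∧ MemLp u₂ 2 volume ∧
    Integrable u₁ volume ∧ Integrable u₂ volume ∧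
    Integrable (Hintegrand ν ν₃ lam₅ lam₆ lam₇ u₁ u₂) volume

/-- Entries of the inverse symbol `l(ξ)⁻¹`. -/
def inv11 (ν ν₃ lam₅ lam₆ lam₇ : ℝ) (ξ : ℝ) : ℝ :=
  sym22 ν₃ ξ / symDet ν ν₃ lam₅ lam₆ lam₇ ξ

def inv12 (ν ν₃ lam₅ lam₆ lam₇ : ℝ) (ξ : ℝ) : ℝ :=
  -lam₇ / symDet ν ν₃ lam₅ lam₆ lam₇ ξ

def inv21 (ν ν₃ lam₅ lam₆ lam₇ : ℝ) (ξ : ℝ) : ℝ :=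
  -lam₅ / symDet ν ν₃ lam₅ lam₆ lam₇ ξ

def inv22 (ν ν₃ lam₅ lam₆ lam₇ : ℝ) (ξ : ℝ) : ℝ :=
  sym11 ν lam₆ ξ / symDet ν ν₃ lam₅ lam₆ lam₇ ξ

/-- `M₁` is an upper bound for the Euclidean operator norms of the matrices `l(ξ)⁻¹`
(finiteness of `‖l⁻¹‖_{M₁}`). -/
def IsM1Bound (ν ν₃ lam₅ lam₆ lam₇ M₁ : ℝ) : Prop :=
  ∀ ξ a b : ℝ,
    Real.sqrt ((inv11 ν ν₃ lam₅ lam₆ lam₇ ξ * a + inv12 ν ν₃ lam₅ lam₆ lam₇ ξ * b) ^ 2 +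
        (inv21 ν ν₃ lam₅ lam₆ lam₇ ξ * a + inv22 ν ν₃ lam₅ lam₆ lam₇ ξ * b) ^ 2) ≤
      M₁ * Real.sqrt (a ^ 2 + b ^ 2)

/-- `M₂` is an upper bound for `max_i (Σ_j ‖(l⁻¹)_{ij}‖_{L²}²)^{1/2}`, together with the
square-integrability of the entries of `l(ξ)⁻¹` (finiteness of `‖l⁻¹‖_{M₂}`). -/
def IsM2Bound (ν ν₃ lam₅ lam₆ lam₇ M₂ : ℝ) : Prop :=
  Integrable (fun ξ : ℝ => inv11 ν ν₃ lam₅ lam₆ lam₇ ξ ^ 2) volume ∧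
  Integrable (fun ξ : ℝ => inv12 ν ν₃ lam₅ lam₆ lam₇ ξ ^ 2) volume ∧
  Integrable (fun ξ : ℝ => inv21 ν ν₃ lam₅ lam₆ lam₇ ξ ^ 2) volume ∧
  Integrable (fun ξ : ℝ => inv22 ν ν₃ lam₅ lam₆ lam₇ ξ ^ 2) volume ∧
  Real.sqrt ((∫ ξ : ℝ, inv11 ν ν₃ lam₅ lam₆ lam₇ ξ ^ 2) +
      ∫ ξ : ℝ, inv12 ν ν₃ lam₅ lam₆ lam₇ ξ ^ 2) ≤ M₂ ∧
  Real.sqrt ((∫ ξ : ℝ, inv21 ν ν₃ lam₅ lam₆ lam₇ ξ ^ 2) +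
      ∫ ξ : ℝ, inv22 ν ν₃ lam₅ lam₆ lam₇ ξ ^ 2) ≤ M₂

end

/-- The nonpolynomial Thomas nonlinearity
`g(u)(x) = −(λ₃u₁² + λ₄u₁ − ν₁u₁u₂ − ν₁λ₁u₂)/(1 + u₁ + λ₁ + ν₂(u₁+λ₁)²) − λ₆u₁ − λ₇u₂`. -/
noncomputable def gfun (ν₁ ν₂ lam₁ lam₃ lam₄ lam₆ lam₇ : ℝ) (u₁ u₂ : ℝ → ℝ) (x : ℝ) : ℝ :=
  -(lam₃ * u₁ x ^ 2 + lam₄ * u₁ x - ν₁ * u₁ x * u₂ x - ν₁ * lam₁ * u₂ x) /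
      (1 + u₁ x + lam₁ + ν₂ * (u₁ x + lam₁) ^ 2)
    - lam₆ * u₁ x - lam₇ * u₂ x

open scoped SchwartzMap ContDiff

/-! Since `l(ξ)⁻¹ (l(ξ) û(ξ)) = û(ξ)`, Cauchy–Schwarz in `ξ` bounds `‖û_j‖_{L¹}` by
`‖l⁻¹‖_{M₂} ‖u‖_H`, and Fourier inversion turns this into `‖u_j‖_{L^∞} ≤ ‖l⁻¹‖_{M₂} ‖u‖_H`.
The nonlinearity is then bounded pointwise: its denominator `1 + t + ν₂ t²` (with `t = u₁ + λ₁`)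
is at least `(4ν₂ - 1)/(4ν₂)`, and its numerator is quadratic in `(u₁, u₂)`. -/

namespace MeasureTheory.Integrable

variable {V E : Type*} [NormedAddCommGroup V] [InnerProductSpace ℝ V] [FiniteDimensional ℝ V]
  [MeasurableSpace V] [BorelSpace V] [NormedAddCommGroup E] [NormedSpace ℂ E]
  {φ : V → ℂ} {f : V → E}

theorem continuous_fourierInv (hf : Integrable f) : Continuous (𝓕⁻ f) := by
  rw [fourierInv_eq_fourier_comp_neg]
  exact VectorFourier.fourierIntegral_continuous Real.continuous_fourierChar continuous_inner
    hf.comp_neg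

variable [CompleteSpace E]

theorem integral_fourier_smul_eq (hφ : Integrable φ) (hf : Integrable f) :
    ∫ ξ, 𝓕 φ ξ • f ξ = ∫ x, φ x • 𝓕 f x := by
  simpa using! VectorFourier.integral_fourierIntegral_smul_eq_flip (L := innerₗ V)
    Real.continuous_fourierChar continuous_inner hφ hf

theorem integral_smul_fourierInv_eq (hφ : Integrable φ) (hf : Integrable f) :
    ∫ x, φ x • 𝓕⁻ f x = ∫ ξ, 𝓕⁻ φ ξ • f ξ := calc
  _ = ∫ x, 𝓕 φ x • f (-x) := by
    rw [fourierInv_eq_fourier_comp_neg, ← integral_fourier_smul_eq hφ hf.comp_neg]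
  _ = _ := by
    rw [← integral_neg_eq_self]
    simp [fourierInv_eq_fourier_neg]

/-- Mathlib's inversion theorem needs continuity of `f`; testing against smooth compactly
supported functions removes it at the cost of an a.e. statement. -/
theorem fourierInv_fourier_ae_eq (hf : Integrable f) (h'f : Integrable (𝓕 f)) :
    𝓕⁻ (𝓕 f) =ᵐ[volume] f := by
  refine ae_eq_of_integral_contDiff_smul_eq h'f.continuous_fourierInv.locallyIntegrable
    hf.locallyIntegrable fun g g_diff g_supp ↦ ?_
  let ψ : 𝓢(V, ℂ) := (g_supp.comp_left Complex.ofReal_zero).toSchwartzMap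
    (Complex.ofRealCLM.contDiff.comp g_diff)
  have hψg : ∀ x, ψ x = g x := fun _ ↦ rfl
  have hψ_int : Integrable (𝓕⁻ (ψ : V → ℂ)) := by
    rw [← SchwartzMap.fourierInv_coe]
    exact (𝓕⁻ ψ).integrable
  have hψ : 𝓕 (𝓕⁻ (ψ : V → ℂ)) = ψ := by
    rw [← SchwartzMap.fourierInv_coe, ← SchwartzMap.fourier_coe,
      FourierTransform.fourier_fourierInv_eq]
  calc ∫ x, g x • 𝓕⁻ (𝓕 f) x = ∫ x, ψ x • 𝓕⁻ (𝓕 f) x := by simp only [hψg, Complex.coe_smul]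
    _ = ∫ ξ, 𝓕 (𝓕⁻ (ψ : V → ℂ)) ξ • f ξ := by
      rw [integral_smul_fourierInv_eq ψ.integrable h'f, integral_fourier_smul_eq hψ_int hf]
    _ = ∫ x, g x • f x := by simp only [hψ, hψg, Complex.coe_smul]

end MeasureTheory.Integrable

theorem mul_add_mul_le_sqrt_mul_sqrt (a b x y : ℝ) :
    a * x + b * y ≤ √(a ^ 2 + b ^ 2) * √(x ^ 2 + y ^ 2) := by
  rw [← Real.sqrt_mul (by positivity)]
  exact (le_abs_self _).trans (Real.abs_le_sqrt (by nlinarith [sq_nonneg (a * y - b * x)]))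

section

variable {α E F : Type*} [MeasurableSpace α] {μ : Measure α}
  [NormedAddCommGroup E] [NormedAddCommGroup F] [NormedSpace ℝ F]

theorem integral_norm_mul_norm_le_sqrt_mul_sqrt {f g : α → E} (hf : MemLp f 2 μ)
    (hg : MemLp g 2 μ) :
    ∫ x, ‖f x‖ * ‖g x‖ ∂μ ≤ √(∫ x, ‖f x‖ ^ 2 ∂μ) * √(∫ x, ‖g x‖ ^ 2 ∂μ) := by
  have h := integral_mul_norm_le_Lp_mul_Lq (μ := μ) (f := f) (g := g)
    Real.HolderConjugate.two_two (by rwa [ENNReal.ofReal_ofNat]) (by rwa [ENNReal.ofReal_ofNat])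
  simpa only [Real.rpow_two, ← Real.sqrt_eq_rpow] using h

theorem integral_norm_smul_add_smul_le {c d : α → ℝ} {v₁ v₂ : α → F}
    (hc : MemLp c 2 μ) (hd : MemLp d 2 μ) (hv₁ : AEStronglyMeasurable v₁ μ)
    (hv₂ : AEStronglyMeasurable v₂ μ) (hv : Integrable (fun x ↦ ‖v₁ x‖ ^ 2 + ‖v₂ x‖ ^ 2) μ) :
    Integrable (fun x ↦ c x • v₁ x + d x • v₂ x) μ ∧
      ∫ x, ‖c x • v₁ x + d x • v₂ x‖ ∂μ ≤
        √((∫ x, c x ^ 2 ∂μ) + ∫ x, d x ^ 2 ∂μ) * √(∫ x, ‖v₁ x‖ ^ 2 + ‖v₂ x‖ ^ 2 ∂μ) := by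
  set p : α → ℝ := fun x ↦ √(c x ^ 2 + d x ^ 2)
  set w : α → ℝ := fun x ↦ √(‖v₁ x‖ ^ 2 + ‖v₂ x‖ ^ 2)
  have hp_sq : ∀ x, ‖p x‖ ^ 2 = c x ^ 2 + d x ^ 2 := fun x ↦ by
    simp only [p, Real.norm_eq_abs, sq_abs]; exact Real.sq_sqrt (by positivity)
  have hw_sq : ∀ x, ‖w x‖ ^ 2 = ‖v₁ x‖ ^ 2 + ‖v₂ x‖ ^ 2 := fun x ↦ by
    simp only [w, Real.norm_eq_abs, sq_abs]; exact Real.sq_sqrt (by positivity)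
  have hcd : Integrable (fun x ↦ c x ^ 2 + d x ^ 2) μ :=
    (hc.integrable_sq).add hd.integrable_sq
  have hp : MemLp p 2 μ := by
    refine (memLp_two_iff_integrable_sq_norm ?_).2 (by simpa only [hp_sq] using hcd)
    exact Real.continuous_sqrt.comp_aestronglyMeasurable ((hc.1.pow 2).add (hd.1.pow 2))
  have hw : MemLp w 2 μ := by
    refine (memLp_two_iff_integrable_sq_norm ?_).2 (by simpa only [hw_sq] using hv)
    exact Real.continuous_sqrt.comp_aestronglyMeasurable ((hv₁.norm.pow 2).add (hv₂.norm.pow 2))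
  have hbound : ∀ x, ‖c x • v₁ x + d x • v₂ x‖ ≤ ‖p x‖ * ‖w x‖ := fun x ↦ by
    calc ‖c x • v₁ x + d x • v₂ x‖ ≤ |c x| * ‖v₁ x‖ + |d x| * ‖v₂ x‖ := by
          simpa only [norm_smul, Real.norm_eq_abs] using norm_add_le (c x • v₁ x) (d x • v₂ x)
      _ ≤ √(|c x| ^ 2 + |d x| ^ 2) * w x := mul_add_mul_le_sqrt_mul_sqrt _ _ _ _
      _ = ‖p x‖ * ‖w x‖ := by
          simp only [p, w, sq_abs, Real.norm_eq_abs, abs_of_nonneg (Real.sqrt_nonneg _)]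
  have hpw : Integrable (fun x ↦ ‖p x‖ * ‖w x‖) μ := (hp.norm.integrable_mul hw.norm)
  refine ⟨hpw.mono' (((hc.1.smul hv₁).add (hd.1.smul hv₂))) (.of_forall hbound), ?_⟩
  calc ∫ x, ‖c x • v₁ x + d x • v₂ x‖ ∂μ ≤ ∫ x, ‖p x‖ * ‖w x‖ ∂μ :=
        integral_mono_of_nonneg (.of_forall fun _ ↦ norm_nonneg _) hpw (.of_forall hbound)
    _ ≤ √(∫ x, ‖p x‖ ^ 2 ∂μ) * √(∫ x, ‖w x‖ ^ 2 ∂μ) :=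
        integral_norm_mul_norm_le_sqrt_mul_sqrt hp hw
    _ = _ := by simp only [hp_sq, hw_sq, integral_add hc.integrable_sq hd.integrable_sq]

end

theorem two_by_two_inverse_smul_fst {M : Type*} [AddCommGroup M] [Module ℝ M] {a b c d : ℝ}
    (h : a * d - b * c ≠ 0) (x y : M) :
    (d / (a * d - b * c)) • (a • x + b • y) + (-b / (a * d - b * c)) • (c • x + d • y) = x := by
  set D := a * d - b * c with hD
  match_scalars <;> field_simp <;> linear_combination -hD

theorem two_by_two_inverse_smul_snd {M : Type*} [AddCommGroup M] [Module ℝ M] {a b c d : ℝ}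
    (h : a * d - b * c ≠ 0) (x y : M) :
    (-c / (a * d - b * c)) • (a • x + b • y) + (a / (a * d - b * c)) • (c • x + d • y) = y := by
  set D := a * d - b * c with hD
  match_scalars <;> field_simp <;> linear_combination -hD

theorem le_one_add_add_mul_sq {ν₂ : ℝ} (hν₂ : 1 / 4 < ν₂) (t : ℝ) :
    (4 * ν₂ - 1) / (4 * ν₂) ≤ 1 + t + ν₂ * t ^ 2 := by
  rw [div_le_iff₀ (by linarith)]
  nlinarith [sq_nonneg (2 * ν₂ * t + 1)]

theorem abs_div_one_add_add_mul_sq_le {ν₂ : ℝ} (hν₂ : 1 / 4 < ν₂) (N t : ℝ) :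
    |N / (1 + t + ν₂ * t ^ 2)| ≤ 4 * ν₂ / (4 * ν₂ - 1) * |N| := by
  have hlow := le_one_add_add_mul_sq hν₂ t
  have h4 : 0 < 4 * ν₂ - 1 := by linarith
  have hpos : 0 < (4 * ν₂ - 1) / (4 * ν₂) := div_pos h4 (by linarith)
  rw [abs_div, abs_of_pos (hpos.trans_le hlow), div_le_iff₀ (hpos.trans_le hlow)]
  calc |N| = 4 * ν₂ / (4 * ν₂ - 1) * |N| * ((4 * ν₂ - 1) / (4 * ν₂)) := by
        field_simp
    _ ≤ _ := by gcongr

theorem abs_gfun_numerator_le {ν₁ lam₁ lam₃ lam₄ a b K : ℝ} (hν₁ : 0 ≤ ν₁) (ha : |a| ≤ K)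
    (hb : |b| ≤ K) :
    |lam₃ * a ^ 2 + lam₄ * a - ν₁ * a * b - ν₁ * lam₁ * b| ≤
      ((|lam₃| + ν₁) * K + (|lam₄| + ν₁ * |lam₁|)) * K := by
  have hK : 0 ≤ K := (abs_nonneg a).trans ha
  calc |lam₃ * a ^ 2 + lam₄ * a - ν₁ * a * b - ν₁ * lam₁ * b|
      ≤ |lam₃| * |a| ^ 2 + |lam₄| * |a| + ν₁ * |a| * |b| + ν₁ * |lam₁| * |b| := by
        have := abs_sub (lam₃ * a ^ 2 + lam₄ * a - ν₁ * a * b) (ν₁ * lam₁ * b)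
        have := abs_sub (lam₃ * a ^ 2 + lam₄ * a) (ν₁ * a * b)
        have := abs_add_le (lam₃ * a ^ 2) (lam₄ * a)
        simp only [abs_mul, abs_pow, abs_of_nonneg hν₁] at *
        linarith
    _ ≤ |lam₃| * K ^ 2 + |lam₄| * K + ν₁ * K * K + ν₁ * |lam₁| * K := by gcongr
    _ = _ := by ring

section ThomasModel

variable {ν ν₃ lam₅ lam₆ lam₇ M₂ : ℝ} {u₁ u₂ : ℝ → ℝ}

theorem continuous_rhat {u : ℝ → ℝ} (hu : Integrable u) : Continuous (rhat u) :=
  VectorFourier.fourierIntegral_continuous Real.continuous_fourierChar continuous_inner hu.ofReal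

theorem ae_abs_le_integral_norm_rhat {u : ℝ → ℝ} (hu : Integrable u)
    (hû : Integrable (rhat u)) : ∀ᵐ x, |u x| ≤ ∫ ξ, ‖rhat u ξ‖ := by
  filter_upwards [hu.ofReal.fourierInv_fourier_ae_eq hû] with x hx
  rw [← Real.norm_eq_abs, ← Complex.norm_real, ← hx]
  exact VectorFourier.norm_fourierIntegral_le_integral_norm _ _ _ _ _

/-- First component of `l(ξ) · û(ξ)`. -/
noncomputable def symRhat₁ (ν lam₆ lam₇ : ℝ) (u₁ u₂ : ℝ → ℝ) (ξ : ℝ) : ℂ :=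
  (sym11 ν lam₆ ξ : ℂ) * rhat u₁ ξ + (lam₇ : ℂ) * rhat u₂ ξ

/-- Second component of `l(ξ) · û(ξ)`. -/
noncomputable def symRhat₂ (ν₃ lam₅ : ℝ) (u₁ u₂ : ℝ → ℝ) (ξ : ℝ) : ℂ :=
  (lam₅ : ℂ) * rhat u₁ ξ + (sym22 ν₃ ξ : ℂ) * rhat u₂ ξ

theorem rhat_eq_inv_smul_symRhat (hdet : ∀ ξ, symDet ν ν₃ lam₅ lam₆ lam₇ ξ ≠ 0) (ξ : ℝ) :
    rhat u₁ ξ = inv11 ν ν₃ lam₅ lam₆ lam₇ ξ • symRhat₁ ν lam₆ lam₇ u₁ u₂ ξ +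
        inv12 ν ν₃ lam₅ lam₆ lam₇ ξ • symRhat₂ ν₃ lam₅ u₁ u₂ ξ ∧
      rhat u₂ ξ = inv21 ν ν₃ lam₅ lam₆ lam₇ ξ • symRhat₁ ν lam₆ lam₇ u₁ u₂ ξ +
        inv22 ν ν₃ lam₅ lam₆ lam₇ ξ • symRhat₂ ν₃ lam₅ u₁ u₂ ξ := by
  simp only [symRhat₁, symRhat₂, ← Complex.real_smul]
  exact ⟨(two_by_two_inverse_smul_fst (hdet ξ) _ _).symm,
    (two_by_two_inverse_smul_snd (hdet ξ) _ _).symm⟩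

theorem integrable_and_integral_norm_le_mul_normH (hu₁ : Integrable u₁) (hu₂ : Integrable u₂)
    (hH : Integrable (Hintegrand ν ν₃ lam₅ lam₆ lam₇ u₁ u₂)) {c d : ℝ → ℝ} (hc : MemLp c 2)
    (hd : MemLp d 2) (hM₂ : √((∫ ξ, c ξ ^ 2) + ∫ ξ, d ξ ^ 2) ≤ M₂) {F : ℝ → ℂ}
    (hF : ∀ ξ, F ξ = c ξ • symRhat₁ ν lam₆ lam₇ u₁ u₂ ξ + d ξ • symRhat₂ ν₃ lam₅ u₁ u₂ ξ) :
    Integrable F ∧ ∫ ξ, ‖F ξ‖ ≤ M₂ * normH ν ν₃ lam₅ lam₆ lam₇ u₁ u₂ := by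
  have hv₁ : Continuous (symRhat₁ ν lam₆ lam₇ u₁ u₂) := by
    have hû₁ := continuous_rhat hu₁
    have hû₂ := continuous_rhat hu₂
    unfold symRhat₁ sym11; fun_prop
  have hv₂ : Continuous (symRhat₂ ν₃ lam₅ u₁ u₂) := by
    have hû₁ := continuous_rhat hu₁
    have hû₂ := continuous_rhat hu₂
    unfold symRhat₂ sym22; fun_prop
  obtain ⟨hint, hle⟩ := integral_norm_smul_add_smul_le hc hd hv₁.aestronglyMeasurable
    hv₂.aestronglyMeasurable hH
  obtain rfl : F = _ := funext hF
  exact ⟨hint, hle.trans (mul_le_mul_of_nonneg_right hM₂ (Real.sqrt_nonneg _))⟩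

theorem ae_abs_le_mul_normH (hdet : ∀ ξ, symDet ν ν₃ lam₅ lam₆ lam₇ ξ ≠ 0)
    (hM₂ : IsM2Bound ν ν₃ lam₅ lam₆ lam₇ M₂) (hu : MemH ν ν₃ lam₅ lam₆ lam₇ u₁ u₂) :
    ∀ᵐ x, |u₁ x| ≤ M₂ * normH ν ν₃ lam₅ lam₆ lam₇ u₁ u₂ ∧
      |u₂ x| ≤ M₂ * normH ν ν₃ lam₅ lam₆ lam₇ u₁ u₂ := by
  obtain ⟨-, -, hu₁, hu₂, hH⟩ := hu
  obtain ⟨h11, h12, h21, h22, hM₂₁, hM₂₂⟩ := hM₂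
  have hdet_meas : Measurable (symDet ν ν₃ lam₅ lam₆ lam₇) := by
    unfold symDet sym11 sym22; fun_prop
  have memLp_two_of_integrable_sq {f : ℝ → ℝ} (hf : Measurable f)
      (hf2 : Integrable (fun ξ ↦ f ξ ^ 2)) : MemLp f 2 :=
    (memLp_two_iff_integrable_sq hf.aestronglyMeasurable).2 hf2
  obtain ⟨hû₁, hL1₁⟩ := integrable_and_integral_norm_le_mul_normH hu₁ hu₂ hH
    (memLp_two_of_integrable_sq (by unfold inv11 sym22; fun_prop) h11)
    (memLp_two_of_integrable_sq (by unfold inv12; fun_prop) h12) hM₂₁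
    (fun ξ ↦ (rhat_eq_inv_smul_symRhat hdet ξ).1)
  obtain ⟨hû₂, hL1₂⟩ := integrable_and_integral_norm_le_mul_normH hu₁ hu₂ hH
    (memLp_two_of_integrable_sq (by unfold inv21; fun_prop) h21)
    (memLp_two_of_integrable_sq (by unfold inv22 sym11; fun_prop) h22) hM₂₂
    (fun ξ ↦ (rhat_eq_inv_smul_symRhat hdet ξ).2)
  filter_upwards [ae_abs_le_integral_norm_rhat hu₁ hû₁, ae_abs_le_integral_norm_rhat hu₂ hû₂]
    with x h₁ h₂
  exact ⟨h₁.trans hL1₁, h₂.trans hL1₂⟩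

end ThomasModel

theorem abs_gfun_le {ν₁ ν₂ lam₁ lam₃ lam₄ lam₆ lam₇ K : ℝ} {u₁ u₂ : ℝ → ℝ} (hν₁ : 0 ≤ ν₁)
    (hν₂ : 1 / 4 < ν₂) {x : ℝ} (h₁ : |u₁ x| ≤ K) (h₂ : |u₂ x| ≤ K) :
    |gfun ν₁ ν₂ lam₁ lam₃ lam₄ lam₆ lam₇ u₁ u₂ x| ≤
      (4 * ν₂ / (4 * ν₂ - 1) * ((|lam₃| + ν₁) * K + (|lam₄| + ν₁ * |lam₁|)) +
        (|lam₆| + |lam₇|)) * K := by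
  have hfrac := abs_div_one_add_add_mul_sq_le hν₂
    (-(lam₃ * u₁ x ^ 2 + lam₄ * u₁ x - ν₁ * u₁ x * u₂ x - ν₁ * lam₁ * u₂ x)) (u₁ x + lam₁)
  have hnum := abs_gfun_numerator_le (lam₁ := lam₁) (lam₃ := lam₃) (lam₄ := lam₄) hν₁ h₁ h₂
  have hκ₀ : 0 ≤ 4 * ν₂ / (4 * ν₂ - 1) := div_nonneg (by linarith) (by linarith)
  rw [abs_neg] at hfrac
  have h₆ : |lam₆ * u₁ x| ≤ |lam₆| * K := by rw [abs_mul]; gcongr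
  have h₇ : |lam₇ * u₂ x| ≤ |lam₇| * K := by rw [abs_mul]; gcongr
  unfold gfun
  rw [show 1 + u₁ x + lam₁ = 1 + (u₁ x + lam₁) by ring]
  set q := -(lam₃ * u₁ x ^ 2 + lam₄ * u₁ x - ν₁ * u₁ x * u₂ x - ν₁ * lam₁ * u₂ x) /
    (1 + (u₁ x + lam₁) + ν₂ * (u₁ x + lam₁) ^ 2)
  have := abs_sub (q - lam₆ * u₁ x) (lam₇ * u₂ x)
  have := abs_sub q (lam₆ * u₁ x)
  linarith [mul_le_mul_of_nonneg_left hnum hκ₀]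

theorem aestronglyMeasurable_gfun {ν₁ ν₂ lam₁ lam₃ lam₄ lam₆ lam₇ : ℝ} {u₁ u₂ : ℝ → ℝ}
    (hu₁ : AEStronglyMeasurable u₁) (hu₂ : AEStronglyMeasurable u₂) :
    AEStronglyMeasurable (gfun ν₁ ν₂ lam₁ lam₃ lam₄ lam₆ lam₇ u₁ u₂) := by
  have hu₁' := hu₁.aemeasurable
  have hu₂' := hu₂.aemeasurable
  refine AEMeasurable.aestronglyMeasurable ?_
  unfold gfun; fun_prop

theorem nonlinearity_Linfty_bound_general
    (ν ν₁ ν₂ ν₃ lam₁ lam₃ lam₄ lam₅ lam₆ lam₇ : ℝ)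
    (hν₁ : 0 < ν₁) (hν₂ : 1 / 4 < ν₂)
    (hdet : ∀ ξ : ℝ, symDet ν ν₃ lam₅ lam₆ lam₇ ξ ≠ 0)
    (M₂ : ℝ)
    (hM₂ : IsM2Bound ν ν₃ lam₅ lam₆ lam₇ M₂)
    (κ₀ κ₂ κ₃ κ₄ : ℝ)
    (hκ₀ : κ₀ = 4 * ν₂ / (4 * ν₂ - 1))
    (hκ₂ : κ₂ = M₂ * (|lam₃| + ν₁))
    (hκ₃ : κ₃ = |lam₄| + ν₁ * |lam₁|)
    (hκ₄ : κ₄ = |lam₆| + |lam₇|)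
    (u₁ u₂ : ℝ → ℝ)
    (hu : MemH ν ν₃ lam₅ lam₆ lam₇ u₁ u₂) :
    MemLp (gfun ν₁ ν₂ lam₁ lam₃ lam₄ lam₆ lam₇ u₁ u₂) ⊤ volume ∧
      eLpNorm (gfun ν₁ ν₂ lam₁ lam₃ lam₄ lam₆ lam₇ u₁ u₂) ⊤ volume ≤
        ENNReal.ofReal (M₂ * (κ₀ * (κ₂ * normH ν ν₃ lam₅ lam₆ lam₇ u₁ u₂ + κ₃) + κ₄) *
          normH ν ν₃ lam₅ lam₆ lam₇ u₁ u₂) := by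
  have hbound : ∀ᵐ x, ‖gfun ν₁ ν₂ lam₁ lam₃ lam₄ lam₆ lam₇ u₁ u₂ x‖ ≤
      M₂ * (κ₀ * (κ₂ * normH ν ν₃ lam₅ lam₆ lam₇ u₁ u₂ + κ₃) + κ₄) *
        normH ν ν₃ lam₅ lam₆ lam₇ u₁ u₂ := by
    filter_upwards [ae_abs_le_mul_normH hdet hM₂ hu] with x ⟨h₁, h₂⟩
    refine (abs_gfun_le hν₁.le hν₂ h₁ h₂).trans_eq ?_
    rw [hκ₀, hκ₂, hκ₃, hκ₄]
    ring
  have hmeas : AEStronglyMeasurable (gfun ν₁ ν₂ lam₁ lam₃ lam₄ lam₆ lam₇ u₁ u₂) :=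
    aestronglyMeasurable_gfun hu.1.aestronglyMeasurable hu.2.1.aestronglyMeasurable
  refine ⟨memLp_top_of_bound hmeas _ hbound, ?_⟩
  rw [eLpNorm_exponent_top]
  exact eLpNormEssSup_le_of_ae_bound hbound

/-- The nonlinearity `g(u)` is essentially bounded, with
`‖g(u)‖_{L^∞} ≤ ‖l⁻¹‖_{M₂}(κ₀(κ₂‖u‖_H + κ₃) + κ₄)‖u‖_H`. -/
theorem nonlinearity_Linfty_bound
    (ν ν₁ ν₂ ν₃ lam₁ lam₃ lam₄ lam₅ lam₆ lam₇ : ℝ)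
    (hν : 0 < ν) (hν₁ : 0 < ν₁) (hν₂ : 1 / 4 < ν₂) (hν₃ : 0 < ν₃)
    (hdet : ∀ ξ : ℝ, symDet ν ν₃ lam₅ lam₆ lam₇ ξ ≠ 0)
    (M₁ M₂ : ℝ)
    (hM₁ : IsM1Bound ν ν₃ lam₅ lam₆ lam₇ M₁)
    (hM₂ : IsM2Bound ν ν₃ lam₅ lam₆ lam₇ M₂)
    (κ₀ κ₂ κ₃ κ₄ : ℝ)
    (hκ₀ : κ₀ = 4 * ν₂ / (4 * ν₂ - 1))
    (hκ₂ : κ₂ = M₂ * (|lam₃| + ν₁))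
    (hκ₃ : κ₃ = |lam₄| + ν₁ * |lam₁|)
    (hκ₄ : κ₄ = |lam₆| + |lam₇|)
    (u₁ u₂ : ℝ → ℝ)
    (hu : MemH ν ν₃ lam₅ lam₆ lam₇ u₁ u₂) :
    MemLp (gfun ν₁ ν₂ lam₁ lam₃ lam₄ lam₆ lam₇ u₁ u₂) ⊤ volume ∧
      eLpNorm (gfun ν₁ ν₂ lam₁ lam₃ lam₄ lam₆ lam₇ u₁ u₂) ⊤ volume ≤
        ENNReal.ofReal (M₂ * (κ₀ * (κ₂ * normH ν ν₃ lam₅ lam₆ lam₇ u₁ u₂ + κ₃) + κ₄) *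
          normH ν ν₃ lam₅ lam₆ lam₇ u₁ u₂) :=
  nonlinearity_Linfty_bound_general ν ν₁ ν₂ ν₃ lam₁ lam₃ lam₄ lam₅ lam₆ lam₇ hν₁ hν₂ hdet M₂ hM₂ κ₀
    κ₂ κ₃ κ₄ hκ₀ hκ₂ hκ₃ hκ₄ u₁ u₂ hu
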